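/- Let n ≥ 1 and let p be a monic real polynomial of degree 2n such that p, viewed over ℂ, has 2n distinct complex roots. Then p has no real root if and only if there exists an invertible n×n matrix Q with entries in ℍ such that the characteristic polynomial of the 2n×2n complex matrix Φ(Q) equals the image of p under the inclusion ℝ[X] → ℂ[X]. -/

import Mathlib

/-- The standard embedding of the quaternions into `2 × 2` complex matrices:
`a + b i + c j + d k` is sent to `[[a + b i, c + d i], [-c + d i, a - b i]]`. -/
noncomputable def quatToMatrix (q : Quaternion ℝ) : Matrix (Fin 2) (Fin 2) ℂ :=
  !![(⟨q.re, q.imI⟩ : ℂ), (⟨q.imJ, q.imK⟩ : ℂ);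
     (⟨-q.imJ, q.imK⟩ : ℂ), (⟨q.re, -q.imI⟩ : ℂ)]

/-- The block embedding of `n × n` quaternionic matrices into `2n × 2n` complex matrices,
whose `2 × 2` block at position `(s, t)` is `φ (Q s t)`. -/
noncomputable def quatMatrixToMatrix {n : ℕ} (Q : Matrix (Fin n) (Fin n) (Quaternion ℝ)) :
    Matrix (Fin n × Fin 2) (Fin n × Fin 2) ℂ :=
  fun p r => quatToMatrix (Q p.1 r.1) p.2 r.2

/-! If `p` has no real root, its complex roots come in conjugate pairs `z, z̄` with `Im z ≠ 0`,
and the diagonal quaternionic matrix with the entries `z` is sent by `Φ` to `diag(z, z̄, …)`.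
Conversely, `Φ(Q)` commutes with an antilinear map `J` with `J² = -1`, so every eigenspace of
`Φ(Q)` for a real eigenvalue is `J`-stable and contains the independent vectors `v` and `J v`:
a real root of the characteristic polynomial has multiplicity at least two, which distinct
roots forbid. -/

open Polynomial Complex ComplexConjugate Module Matrix Quaternion

theorem Polynomial.map_quadratic_eq_mul_conj (z : ℂ) :
    (X ^ 2 - C (2 * z.re) * X + C (‖z‖ ^ 2) : ℝ[X]).map (algebraMap ℝ ℂ) =
      (X - C z) * (X - C (conj z)) := by
  have hsum : ((2 * z.re : ℝ) : ℂ) = z + conj z := by rw [add_conj]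
  have hprod : ((‖z‖ ^ 2 : ℝ) : ℂ) = z * conj z := by rw [mul_conj']; norm_cast
  simp only [Polynomial.map_add, Polynomial.map_sub, Polynomial.map_mul, Polynomial.map_pow,
    map_X, map_C, Complex.coe_algebraMap, hsum, hprod]
  simp only [C_add, C_mul]
  ring

theorem Polynomial.exists_map_eq_prod_mul_conj {n : ℕ} {p : ℝ[X]} (hp : p.Monic)
    (hdeg : p.natDegree = 2 * n) (hreal : ∀ x : ℝ, p.eval x ≠ 0) :
    ∃ z : Fin n → ℂ, (∀ i, (z i).im ≠ 0) ∧
      p.map (algebraMap ℝ ℂ) = ∏ i, (X - C (z i)) * (X - C (conj (z i))) := by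
  induction n generalizing p with
  | zero =>
    refine ⟨Fin.elim0, fun i => i.elim0, ?_⟩
    rw [eq_one_of_monic_natDegree_zero hp hdeg]
    simp
  | succ n ih =>
    obtain ⟨z, hz⟩ := IsAlgClosed.exists_aeval_eq_zero ℂ p (by
      rw [degree_eq_natDegree hp.ne_zero, hdeg]; exact_mod_cast (by omega : 2 * (n + 1) ≠ 0))
    have him : z.im ≠ 0 := by
      intro h
      have hre : z = algebraMap ℝ ℂ z.re := Complex.ext rfl (by simp [h])
      rw [hre, aeval_algebraMap_apply_eq_algebraMap_eval, map_eq_zero] at hz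
      exact hreal _ hz
    obtain ⟨r, hr⟩ := p.quadratic_dvd_of_aeval_eq_zero_im_ne_zero hz him
    set q : ℝ[X] := X ^ 2 - C (2 * z.re) * X + C (‖z‖ ^ 2) with hq_def
    have hq : q.Monic := by rw [hq_def]; monicity!
    have hqdeg : q.natDegree = 2 := by rw [hq_def]; compute_degree!
    have hrm : r.Monic := hq.of_mul_monic_left (hr ▸ hp)
    have hrdeg : r.natDegree = 2 * n := by
      rw [hr, hq.natDegree_mul hrm, hqdeg] at hdeg; omega
    obtain ⟨w, hw, hrw⟩ := ih hrm hrdeg fun x hx => hreal x (by simp [hr, hx])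
    refine ⟨Fin.cons z w, Fin.cases him hw, ?_⟩
    rw [hr, Polynomial.map_mul, map_quadratic_eq_mul_conj, hrw, Fin.prod_univ_succ]
    simp

theorem Polynomial.nodup_roots_of_natDegree_le_card_toFinset {R : Type*} [CommRing R]
    [IsDomain R] [DecidableEq R] {p : R[X]} (h : p.natDegree ≤ p.roots.toFinset.card) :
    p.roots.Nodup :=
  Multiset.toFinset_card_eq_card_iff_nodup.mp
    (le_antisymm (Multiset.toFinset_card_le _) ((card_roots' p).trans h))

section AntilinearInvolution

variable {V : Type*} [AddCommGroup V] [Module ℂ V] {J : V →ₗ⋆[ℂ] V}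

theorem linearIndependent_pair_of_antilinear_sq_neg_one (hJ : ∀ v, J (J v) = -v) {v : V}
    (hv : v ≠ 0) : LinearIndependent ℂ ![v, J v] := by
  refine (LinearIndependent.pair_iff' hv).mpr fun c hc => hv ?_
  have h : ((normSq c + 1 : ℝ) : ℂ) • v = 0 := by
    have := hJ v
    rw [← hc, map_smulₛₗ, ← hc, smul_smul, mul_comm, mul_conj] at this
    rw [ofReal_add, ofReal_one, add_smul, one_smul, this, neg_add_cancel]
  exact (smul_eq_zero.mp h).resolve_left (ofReal_ne_zero.mpr (by linarith [normSq_nonneg c]))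

theorem Module.End.two_le_finrank_eigenspace_of_antilinear [FiniteDimensional ℂ V]
    (hJ : ∀ v, J (J v) = -v) (f : End ℂ V) (hfJ : ∀ v, f (J v) = J (f v)) {x : ℝ}
    (hx : f.HasEigenvalue x) : 2 ≤ finrank ℂ (f.eigenspace x) := by
  obtain ⟨v, hv, hv0⟩ := hx.exists_hasEigenvector
  have hJv : J v ∈ f.eigenspace x := by
    rw [mem_eigenspace_iff] at hv ⊢
    rw [hfJ, hv, map_smulₛₗ, starRingEnd_apply, star_def, conj_ofReal]
  have hspan : Submodule.span ℂ (Set.range ![v, J v]) ≤ f.eigenspace x := by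
    rw [Submodule.span_le, Matrix.range_cons, Matrix.range_cons, Matrix.range_empty]
    simp [Set.insert_subset_iff, hv, hJv]
  calc 2 = finrank ℂ (Submodule.span ℂ (Set.range ![v, J v])) := by
        rw [finrank_span_eq_card (linearIndependent_pair_of_antilinear_sq_neg_one hJ hv0)]; rfl
    _ ≤ _ := Submodule.finrank_mono hspan

end AntilinearInvolution

/-- Under the identification `ℍ ≃ ℂ²`, `h ↦ φ h (1, 0)`, on each block this is right
multiplication by `-j`; it therefore commutes with the left multiplications `φ q`. -/
def quatJ (n : ℕ) : (Fin n × Fin 2 → ℂ) →ₗ⋆[ℂ] (Fin n × Fin 2 → ℂ) where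
  toFun v i := if i.2 = 0 then -conj (v (i.1, 1)) else conj (v (i.1, 0))
  map_add' v w := by ext ⟨i, a⟩; fin_cases a <;> simp [add_comm]
  map_smul' c v := by ext ⟨i, a⟩; fin_cases a <;> simp

theorem quatJ_quatJ {n : ℕ} (v : Fin n × Fin 2 → ℂ) : quatJ n (quatJ n v) = -v := by
  ext ⟨i, a⟩
  fin_cases a <;> simp [quatJ]

theorem quatMatrixToMatrix_mulVec_quatJ {n : ℕ} (Q : Matrix (Fin n) (Fin n) ℍ)
    (v : Fin n × Fin 2 → ℂ) :
    quatMatrixToMatrix Q *ᵥ quatJ n v = quatJ n (quatMatrixToMatrix Q *ᵥ v) := by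
  ext ⟨i, a⟩
  fin_cases a <;>
  simp only [mulVec, dotProduct, quatMatrixToMatrix, quatToMatrix, quatJ, LinearMap.coe_mk,
    AddHom.coe_mk, of_apply, cons_val', cons_val_fin_one, cons_val_zero, cons_val_one,
    Fin.isValue, ↓reduceIte, one_ne_zero, mul_ite, mul_neg, Fintype.sum_prod_type,
    Fin.sum_univ_two, map_sum, map_add, map_mul, ← Finset.sum_neg_distrib, neg_add_rev] <;>
  refine Finset.sum_congr rfl fun j _ => ?_ <;>
  apply Complex.ext <;> simp <;> ring

theorem two_le_rootMultiplicity_charpoly_quatMatrixToMatrix {n : ℕ} (Q : Matrix (Fin n) (Fin n) ℍ)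
    {x : ℝ} (hx : (quatMatrixToMatrix Q).charpoly.IsRoot (x : ℂ)) :
    2 ≤ (quatMatrixToMatrix Q).charpoly.rootMultiplicity (x : ℂ) := by
  rw [← charpoly_toLin'] at hx ⊢
  calc 2 ≤ finrank ℂ (End.eigenspace (toLin' (quatMatrixToMatrix Q)) x) :=
        End.two_le_finrank_eigenspace_of_antilinear quatJ_quatJ _
          (quatMatrixToMatrix_mulVec_quatJ Q) ((End.hasEigenvalue_iff_isRoot_charpoly _ _).mpr hx)
    _ ≤ _ := LinearMap.finrank_eigenspace_le _ _

theorem not_isRoot_charpoly_quatMatrixToMatrix_of_nodup {n : ℕ} {Q : Matrix (Fin n) (Fin n) ℍ}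
    (hQ : (quatMatrixToMatrix Q).charpoly.roots.Nodup) (x : ℝ) :
    ¬(quatMatrixToMatrix Q).charpoly.IsRoot (x : ℂ) := fun hx => by
  have h1 := Multiset.nodup_iff_count_le_one.mp hQ (x : ℂ)
  have h2 := two_le_rootMultiplicity_charpoly_quatMatrixToMatrix Q hx
  rw [count_roots] at h1
  omega

theorem Matrix.isUnit_diagonal_of_ne_zero {ι D : Type*} [Fintype ι] [DecidableEq ι]
    [DivisionRing D] {d : ι → D} (hd : ∀ i, d i ≠ 0) : IsUnit (diagonal d) :=
  (Pi.isUnit_iff.mpr fun i => (hd i).isUnit).map (diagonalRingHom ι D)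

theorem quatToMatrix_coeComplex (z : ℂ) : quatToMatrix z = diagonal ![z, conj z] := by
  ext a b
  fin_cases a <;> fin_cases b <;> simp [quatToMatrix, Complex.ext_iff]

theorem quatMatrixToMatrix_diagonal_coeComplex {n : ℕ} (z : Fin n → ℂ) :
    quatMatrixToMatrix (diagonal fun i => (z i : ℍ)) =
      diagonal fun ia => ![z ia.1, conj (z ia.1)] ia.2 := by
  ext ⟨i, a⟩ ⟨j, b⟩
  by_cases hij : i = j
  · subst hij
    simp [quatMatrixToMatrix, quatToMatrix_coeComplex, diagonal_apply]
  · have hzero : quatToMatrix 0 = 0 := by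
      rw [← coeComplex_zero, quatToMatrix_coeComplex]; simp
    simp [quatMatrixToMatrix, hij, hzero]

theorem charpoly_quatMatrixToMatrix_diagonal_coeComplex {n : ℕ} (z : Fin n → ℂ) :
    (quatMatrixToMatrix (diagonal fun i => (z i : ℍ))).charpoly =
      ∏ i, (X - C (z i)) * (X - C (conj (z i))) := by
  rw [quatMatrixToMatrix_diagonal_coeComplex, charpoly_diagonal, Fintype.prod_prod_type]
  simp [Fin.prod_univ_two]

theorem no_real_root_iff_charpoly_of_quaternionic_general {n : ℕ}
    (p : Polynomial ℝ) (hmonic : p.Monic) (hdeg : p.natDegree = 2 * n)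
    (hroots : (p.map (algebraMap ℝ ℂ)).roots.toFinset.card = 2 * n) :
    (∀ x : ℝ, p.eval x ≠ 0) ↔
      ∃ Q : Matrix (Fin n) (Fin n) (Quaternion ℝ), IsUnit Q ∧
        Matrix.charpoly (quatMatrixToMatrix Q) = p.map (algebraMap ℝ ℂ) := by
  constructor
  · intro hreal
    obtain ⟨z, hz, hpz⟩ := exists_map_eq_prod_mul_conj hmonic hdeg hreal
    refine ⟨diagonal fun i => (z i : ℍ), isUnit_diagonal_of_ne_zero fun i h => hz i ?_,
      by rw [charpoly_quatMatrixToMatrix_diagonal_coeComplex, hpz]⟩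
    simpa using congrArg QuaternionAlgebra.imI h
  · rintro ⟨Q, -, hQ⟩ x hx
    have hnodup : (quatMatrixToMatrix Q).charpoly.roots.Nodup :=
      nodup_roots_of_natDegree_le_card_toFinset <| by
        rw [charpoly_natDegree_eq_dim, hQ, hroots, Fintype.card_prod, Fintype.card_fin,
          Fintype.card_fin, mul_comm]
    refine not_isRoot_charpoly_quatMatrixToMatrix_of_nodup hnodup x ?_
    simpa [hQ, hx] using aeval_algebraMap_apply_eq_algebraMap_eval (A := ℂ) x p

/-- **Transfer criterion for regular semisimple conjugacy classes** (Section 15 of the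
paper, case `d = 2`). Let `n ≥ 1` and let `p` be a monic real polynomial of degree `2n`
having `2n` distinct complex roots. Then `p` has no real root if and only if there is an
invertible `n × n` quaternionic matrix `Q` whose associated `2n × 2n` complex matrix `Φ(Q)`
has characteristic polynomial equal to `p` (viewed over `ℂ`). -/
theorem no_real_root_iff_charpoly_of_quaternionic {n : ℕ} (hn : 1 ≤ n)
    (p : Polynomial ℝ) (hmonic : p.Monic) (hdeg : p.natDegree = 2 * n)
    (hroots : (p.map (algebraMap ℝ ℂ)).roots.toFinset.card = 2 * n) :
    (∀ x : ℝ, p.eval x ≠ 0) ↔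
      ∃ Q : Matrix (Fin n) (Fin n) (Quaternion ℝ), IsUnit Q ∧
        Matrix.charpoly (quatMatrixToMatrix Q) = p.map (algebraMap ℝ ℂ) :=
  no_real_root_iff_charpoly_of_quaternionic_general p hmonic hdeg hroots
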